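/- arXiv:2404.09710 — 3 statements merged into one kernel-verified Lean document; each statement's English description precedes it below -/
import Mathlib

section
/- Let g(x) = x² + x^{2d} with d ≥ 1 an integer. Then for all x ∈ (0,1], the derivative of the inverse satisfies 1/((2d+2)√x) ≤ (g⁻¹)'(x) ≤ 1/√x. -/
/-!
On `(0, 1]` the root `y = h x` of `y² + y^{2d} = x` satisfies `y ≤ √x ≤ 2y`, because
`y^{2d} ≤ y²` there. Hence `g'(y) = 2y + 2d y^{2d-1}` lies between `√x` and `(2d + 2)√x`,
and the inverse function rule `h'(x) = 1 / g'(h x)` gives the bounds.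
-/

open Set

theorem StrictMonoOn.strictMonoOn_of_leftInvOn {α β : Type*} [LinearOrder α] [LinearOrder β]
    {g : α → β} {h : β → α} {s : Set α} {t : Set β} (hg : StrictMonoOn g s)
    (hh : MapsTo h t s) (hgh : LeftInvOn g h t) : StrictMonoOn h t := by
  intro a ha b hb hab
  by_contra! hba
  have := hg.monotoneOn (hh hb) (hh ha) hba
  rw [hgh ha, hgh hb] at this
  exact this.not_gt hab

theorem HasDerivAt.of_leftInvOn_of_strictMonoOn {g h : ℝ → ℝ} {s : Set ℝ} {g' x : ℝ}
    (hs : IsOpen s) (hg : StrictMonoOn g s) (hgs : MapsTo g s s) (hhs : MapsTo h s s)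
    (hgh : LeftInvOn g h s) (hx : x ∈ s) (hdg : HasDerivAt g g' (h x)) (hg' : g' ≠ 0) :
    HasDerivAt h g'⁻¹ x := by
  have hhg : RightInvOn g h s := hg.injOn.rightInvOn_of_leftInvOn hgh hgs hhs
  have himage : s ⊆ h '' s := fun y hy => ⟨g y, hgs hy, hhg hy⟩
  have hcont : ContinuousAt h x :=
    (hg.strictMonoOn_of_leftInvOn hhs hgh).continuousAt_of_image_mem_nhds (hs.mem_nhds hx)
      (Filter.mem_of_superset (hs.mem_nhds (hhs hx)) himage)
  exact hdg.of_local_left_inverse hcont hg' (Filter.eventually_of_mem (hs.mem_nhds hx) hgh)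

section SqAddPow

variable {d : ℕ} {x y : ℝ}

theorem strictMonoOn_sq_add_pow (d : ℕ) :
    StrictMonoOn (fun y : ℝ => y ^ 2 + y ^ (2 * d)) (Ioi 0) :=
  fun _ ha _ _ hab => add_lt_add_of_lt_of_le (pow_lt_pow_left₀ hab (le_of_lt ha) two_ne_zero)
    (pow_le_pow_left₀ (le_of_lt ha) hab.le _)

theorem mapsTo_sq_add_pow (d : ℕ) : MapsTo (fun y : ℝ => y ^ 2 + y ^ (2 * d)) (Ioi 0) (Ioi 0) :=
  fun y (hy : 0 < y) => show 0 < y ^ 2 + y ^ (2 * d) by positivity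

theorem hasDerivAt_sq_add_pow (d : ℕ) (y : ℝ) :
    HasDerivAt (fun y : ℝ => y ^ 2 + y ^ (2 * d)) (2 * y + 2 * d * y ^ (2 * d - 1)) y :=
  ((hasDerivAt_pow 2 y).add (hasDerivAt_pow (2 * d) y)).congr_deriv (by push_cast; ring)

theorem le_sqrt_of_sq_add_pow_eq (hy : 0 ≤ y) (hx : y ^ 2 + y ^ (2 * d) = x) : y ≤ √x :=
  Real.le_sqrt_of_sq_le (by rw [← hx]; linarith [pow_nonneg hy (2 * d)])

theorem sqrt_le_two_mul_of_sq_add_pow_eq (hd : 1 ≤ d) (hy : 0 ≤ y)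
    (hx : y ^ 2 + y ^ (2 * d) = x) (hx1 : x ≤ 1) : √x ≤ 2 * y := by
  have hy1 : y ≤ 1 := (le_sqrt_of_sq_add_pow_eq hy hx).trans (Real.sqrt_le_one.mpr hx1)
  have hpow : y ^ (2 * d) ≤ y ^ 2 := pow_le_pow_of_le_one hy hy1 (by omega)
  exact Real.sqrt_le_iff.mpr ⟨by positivity, by nlinarith⟩

theorem sqrt_le_deriv_sq_add_pow (hd : 1 ≤ d) (hy : 0 ≤ y)
    (hx : y ^ 2 + y ^ (2 * d) = x) (hx1 : x ≤ 1) : √x ≤ 2 * y + 2 * d * y ^ (2 * d - 1) := by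
  have : 0 ≤ 2 * (d : ℝ) * y ^ (2 * d - 1) := by positivity
  linarith [sqrt_le_two_mul_of_sq_add_pow_eq hd hy hx hx1]

theorem deriv_sq_add_pow_le (hd : 1 ≤ d) (hy : 0 ≤ y)
    (hx : y ^ 2 + y ^ (2 * d) = x) (hx1 : x ≤ 1) :
    2 * y + 2 * d * y ^ (2 * d - 1) ≤ (2 * d + 2) * √x := by
  have hy_le : y ≤ √x := le_sqrt_of_sq_add_pow_eq hy hx
  have hy1 : y ≤ 1 := hy_le.trans (Real.sqrt_le_one.mpr hx1)
  have hpow : y ^ (2 * d - 1) ≤ √x :=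
    calc y ^ (2 * d - 1) ≤ y ^ 1 := pow_le_pow_of_le_one hy hy1 (by omega)
      _ = y := pow_one y
      _ ≤ √x := hy_le
  have : (0 : ℝ) ≤ 2 * d := by positivity
  nlinarith

end SqAddPow

/-- for `g(x) = x² + x^{2d}` with inverse `h` on `(0,∞)`, the derivative
of the inverse satisfies `1/((2d+2)√x) ≤ h'(x) ≤ 1/√x` for `x ∈ (0,1]`. -/
theorem g_inverse_deriv_bounds_interval (d : ℕ) (hd : 1 ≤ d)
    (h : ℝ → ℝ) (hinv : ∀ x : ℝ, 0 < x → 0 < h x ∧ (h x) ^ 2 + (h x) ^ (2 * d) = x) :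
    ∀ x ∈ Set.Ioc (0 : ℝ) 1,
      1 / ((2 * d + 2) * Real.sqrt x) ≤ deriv h x ∧ deriv h x ≤ 1 / Real.sqrt x := by
  rintro x ⟨hx0, hx1⟩
  obtain ⟨hy, hyx⟩ := hinv x hx0
  have hlower := sqrt_le_deriv_sq_add_pow hd hy.le hyx hx1
  have hupper := deriv_sq_add_pow_le hd hy.le hyx hx1
  have hsqrt : 0 < √x := Real.sqrt_pos.mpr hx0
  have hderiv : HasDerivAt h (2 * h x + 2 * d * h x ^ (2 * d - 1))⁻¹ x :=
    HasDerivAt.of_leftInvOn_of_strictMonoOn isOpen_Ioi (strictMonoOn_sq_add_pow d)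
      (mapsTo_sq_add_pow d) (fun x hx => (hinv x hx).1) (fun x hx => (hinv x hx).2) hx0
      (hasDerivAt_sq_add_pow d (h x)) (hsqrt.trans_le hlower).ne'
  rw [hderiv.deriv, one_div, one_div]
  exact ⟨inv_anti₀ (hsqrt.trans_le hlower) hupper, inv_anti₀ hsqrt hlower⟩
end

section
/- Let ν₁, ν₂ be measures on [0,∞) and c₁, c₂ > 0 such that ν₂(A ∩ [0,1]) ≥ c₁·ν₁(A ∩ [0,1]) for all measurable A, and ν₁ ≥ c₂·ν₂ on [0,∞). Suppose there is ε > 0 such that for every sum of squares s with ∫ s dν₂ = 1, ∫ x s(x) dν₂(x) ≥ ε. Then for every sum of squares s with ∫ s dν₁ = 1 one has ∫ x s(x) dν₁(x) ≥ min{1/2, (c₁ c₂/2)·ε}. -/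
open MeasureTheory

/-- `p` is a sum of squares of univariate polynomials. -/
def IsSOS (p : Polynomial ℝ) : Prop :=
  ∃ (k : ℕ) (q : Fin k → Polynomial ℝ), p = ∑ i, (q i) ^ 2

/-!
If `∫ x s dν₁ < 1/2`, then, as `x ≥ 1` off `[0,1]` on the support of `ν₁`, the normalized
`s` keeps mass at least `1/2` on `[0,1]`. Hence `T = ∫ s dν₂ ≥ c₁/2`, and `T` is finite
because `c₂ T ≤ ∫ s dν₁ = 1`. The program bound for `ν₂`, applied to `s / T`, gives
`∫ x s dν₂ ≥ ε T`, and finally `∫ x s dν₁ ≥ c₂ ∫ x s dν₂ ≥ c₁ c₂ ε / 2`.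
-/

open Polynomial ENNReal

lemma IsSOS.eval_nonneg {p : ℝ[X]} (hp : IsSOS p) (x : ℝ) : 0 ≤ p.eval x := by
  obtain ⟨k, q, rfl⟩ := hp
  simp only [eval_finsetSum, eval_pow]
  exact Finset.sum_nonneg fun i _ => sq_nonneg _

lemma IsSOS.C_mul {p : ℝ[X]} (hp : IsSOS p) {a : ℝ} (ha : 0 ≤ a) : IsSOS (C a * p) := by
  obtain ⟨k, q, rfl⟩ := hp
  refine ⟨k, fun i => C √a * q i, ?_⟩
  rw [Finset.mul_sum]
  refine Finset.sum_congr rfl fun i _ => ?_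
  rw [mul_pow, ← C_pow, Real.sq_sqrt ha]

namespace MeasureTheory

variable {α : Type*} [MeasurableSpace α]

lemma const_mul_lintegral_le_of_forall_le {μ ν : Measure α} {c : ℝ≥0∞}
    (h : ∀ A, MeasurableSet A → c * μ A ≤ ν A) (f : α → ℝ≥0∞) :
    c * ∫⁻ x, f x ∂μ ≤ ∫⁻ x, f x ∂ν := by
  rw [← smul_eq_mul, ← lintegral_smul_measure]
  exact lintegral_mono' (Measure.le_iff.2 h) le_rfl

lemma const_mul_setLIntegral_le_of_forall_le {μ ν : Measure α} {c : ℝ≥0∞} {S : Set α}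
    (h : ∀ A, MeasurableSet A → c * μ (A ∩ S) ≤ ν (A ∩ S))
    (f : α → ℝ≥0∞) :
    c * ∫⁻ x in S, f x ∂μ ≤ ∫⁻ x in S, f x ∂ν :=
  const_mul_lintegral_le_of_forall_le
    (fun A hA => by simpa only [Measure.restrict_apply hA] using h A hA) f

end MeasureTheory

lemma lintegral_le_setLIntegral_Icc_add_lintegral_mul {ν : Measure ℝ} (hν : ν (Set.Iio 0) = 0)
    {f : ℝ → ℝ} (hf : ∀ x, 0 ≤ f x) :
    ∫⁻ x, ENNReal.ofReal (f x) ∂ν ≤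
      ∫⁻ x in Set.Icc 0 1, ENNReal.ofReal (f x) ∂ν + ∫⁻ x, ENNReal.ofReal (x * f x) ∂ν := by
  rw [← lintegral_add_compl _ measurableSet_Icc]
  refine add_le_add le_rfl ?_
  refine (lintegral_mono_ae ?_).trans (setLIntegral_le_lintegral _ _)
  have hnonneg : ∀ᵐ x ∂ν, 0 ≤ x := ae_iff.2 (measure_mono_null (fun _ => not_le.1) hν)
  filter_upwards [ae_restrict_of_ae hnonneg, ae_restrict_mem measurableSet_Icc.compl]
    with x hx hxI
  have hx1 : 1 ≤ x := le_of_not_ge fun h => hxI ⟨hx, h⟩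
  exact ENNReal.ofReal_le_ofReal (le_mul_of_one_le_left (hf x) hx1)

lemma ofReal_mul_lintegral_le_of_normalized {ν : Measure ℝ} {ε : ℝ}
    (hlb : ∀ s : ℝ[X], IsSOS s → (∫⁻ x, ENNReal.ofReal (s.eval x) ∂ν) = 1 →
      ENNReal.ofReal ε ≤ ∫⁻ x, ENNReal.ofReal (x * s.eval x) ∂ν)
    {s : ℝ[X]} (hs : IsSOS s) (h0 : ∫⁻ x, ENNReal.ofReal (s.eval x) ∂ν ≠ 0)
    (htop : ∫⁻ x, ENNReal.ofReal (s.eval x) ∂ν ≠ ∞) :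
    ENNReal.ofReal ε * ∫⁻ x, ENNReal.ofReal (s.eval x) ∂ν ≤
      ∫⁻ x, ENNReal.ofReal (x * s.eval x) ∂ν := by
  set T := ∫⁻ x, ENNReal.ofReal (s.eval x) ∂ν
  have ht : 0 < T.toReal := ENNReal.toReal_pos h0 htop
  have hscale : ∀ y : ℝ, ENNReal.ofReal (T.toReal⁻¹ * y) = T⁻¹ * ENNReal.ofReal y := fun y => by
    rw [ENNReal.ofReal_mul (inv_nonneg.2 ht.le), ENNReal.ofReal_inv_of_pos ht,
      ENNReal.ofReal_toReal htop]
  have key := hlb _ (hs.C_mul (inv_nonneg.2 ht.le)) (by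
    simp only [eval_mul, eval_C, hscale]
    rw [lintegral_const_mul' _ _ (ENNReal.inv_ne_top.2 h0), ENNReal.inv_mul_cancel h0 htop])
  simp only [eval_mul, eval_C, mul_left_comm _ T.toReal⁻¹, hscale] at key
  rw [lintegral_const_mul' _ _ (ENNReal.inv_ne_top.2 h0)] at key
  rwa [mul_comm, ENNReal.mul_le_iff_le_inv h0 htop]

theorem pushforward_program_comparison_general (ν₁ ν₂ : Measure ℝ)
    (hsupp₁ : ν₁ (Set.Iio 0) = 0)
    (c₁ c₂ : ℝ) (hc₁ : 0 < c₁) (hc₂ : 0 < c₂)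
    (h₁ : ∀ A : Set ℝ, MeasurableSet A →
      ENNReal.ofReal c₁ * ν₁ (A ∩ Set.Icc 0 1) ≤ ν₂ (A ∩ Set.Icc 0 1))
    (h₂ : ∀ A : Set ℝ, MeasurableSet A → ENNReal.ofReal c₂ * ν₂ A ≤ ν₁ A)
    (ε : ℝ)
    (hlb : ∀ s : Polynomial ℝ, IsSOS s →
      (∫⁻ x, ENNReal.ofReal (Polynomial.eval x s) ∂ν₂) = 1 →
      ENNReal.ofReal ε ≤ ∫⁻ x, ENNReal.ofReal (x * Polynomial.eval x s) ∂ν₂) :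
    ∀ s : Polynomial ℝ, IsSOS s →
      (∫⁻ x, ENNReal.ofReal (Polynomial.eval x s) ∂ν₁) = 1 →
      ENNReal.ofReal (min (1 / 2) (c₁ * c₂ / 2 * ε))
        ≤ ∫⁻ x, ENNReal.ofReal (x * Polynomial.eval x s) ∂ν₁ := by
  intro s hs hnorm
  rcases le_or_gt (ENNReal.ofReal (1 / 2)) (∫⁻ x, ENNReal.ofReal (x * s.eval x) ∂ν₁)
    with hbig | hsmall
  · exact (ENNReal.ofReal_le_ofReal (min_le_left _ _)).trans hbig
  rw [one_div, ENNReal.ofReal_inv_of_pos two_pos, ENNReal.ofReal_ofNat] at hsmall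
  have hmass : 2⁻¹ ≤ ∫⁻ x in Set.Icc 0 1, ENNReal.ofReal (s.eval x) ∂ν₁ := by
    by_contra! h
    have := (hnorm.symm.trans_le
      (lintegral_le_setLIntegral_Icc_add_lintegral_mul hsupp₁ hs.eval_nonneg)).trans_lt
      (ENNReal.add_lt_add h hsmall)
    rw [ENNReal.inv_two_add_inv_two] at this
    exact this.false
  set T := ∫⁻ x, ENNReal.ofReal (s.eval x) ∂ν₂
  have hT_ge : ENNReal.ofReal c₁ * 2⁻¹ ≤ T :=
    (mul_le_mul_right hmass _).trans ((const_mul_setLIntegral_le_of_forall_le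
      h₁ _).trans (setLIntegral_le_lintegral _ _))
  have hT_le : ENNReal.ofReal c₂ * T ≤ 1 :=
    hnorm ▸ const_mul_lintegral_le_of_forall_le h₂ _
  have hT0 : T ≠ 0 := (lt_of_lt_of_le (by simpa using hc₁) hT_ge).ne'
  have hTtop : T ≠ ∞ := fun h => by simp [h, ENNReal.mul_top, hc₂] at hT_le
  calc ENNReal.ofReal (min (1 / 2) (c₁ * c₂ / 2 * ε))
      ≤ ENNReal.ofReal c₂ * (ENNReal.ofReal ε * (ENNReal.ofReal c₁ * 2⁻¹)) := by
        rw [← ENNReal.ofReal_ofNat 2, ← ENNReal.ofReal_inv_of_pos two_pos,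
          ← ENNReal.ofReal_mul hc₁.le, ← ENNReal.ofReal_mul' (by positivity),
          ← ENNReal.ofReal_mul hc₂.le]
        exact ENNReal.ofReal_le_ofReal ((min_le_right _ _).trans_eq (by ring))
    _ ≤ ENNReal.ofReal c₂ * (ENNReal.ofReal ε * T) := by gcongr
    _ ≤ ENNReal.ofReal c₂ * ∫⁻ x, ENNReal.ofReal (x * s.eval x) ∂ν₂ := by
        gcongr
        exact ofReal_mul_lintegral_le_of_normalized hlb hs hT0 hTtop
    _ ≤ ∫⁻ x, ENNReal.ofReal (x * s.eval x) ∂ν₁ := const_mul_lintegral_le_of_forall_le h₂ _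

/-- comparison of the push-forward programs of two measures on `[0,∞)`.
If `ν₂ ≥ c₁ ν₁` on `[0,1]`, `ν₁ ≥ c₂ ν₂` everywhere, and the program for `ν₂` is
bounded below by `ε`, then the program for `ν₁` is bounded below by
`min {1/2, c₁c₂ε/2}`. -/
theorem pushforward_program_comparison (ν₁ ν₂ : Measure ℝ)
    (hsupp₁ : ν₁ (Set.Iio 0) = 0) (hsupp₂ : ν₂ (Set.Iio 0) = 0)
    (c₁ c₂ : ℝ) (hc₁ : 0 < c₁) (hc₂ : 0 < c₂)
    (h₁ : ∀ A : Set ℝ, MeasurableSet A →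
      ENNReal.ofReal c₁ * ν₁ (A ∩ Set.Icc 0 1) ≤ ν₂ (A ∩ Set.Icc 0 1))
    (h₂ : ∀ A : Set ℝ, MeasurableSet A → ENNReal.ofReal c₂ * ν₂ A ≤ ν₁ A)
    (ε : ℝ) (hε : 0 < ε)
    (hlb : ∀ s : Polynomial ℝ, IsSOS s →
      (∫⁻ x, ENNReal.ofReal (Polynomial.eval x s) ∂ν₂) = 1 →
      ENNReal.ofReal ε ≤ ∫⁻ x, ENNReal.ofReal (x * Polynomial.eval x s) ∂ν₂) :
    ∀ s : Polynomial ℝ, IsSOS s →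
      (∫⁻ x, ENNReal.ofReal (Polynomial.eval x s) ∂ν₁) = 1 →
      ENNReal.ofReal (min (1 / 2) (c₁ * c₂ / 2 * ε))
        ≤ ∫⁻ x, ENNReal.ofReal (x * Polynomial.eval x s) ∂ν₁ :=
  pushforward_program_comparison_general ν₁ ν₂ hsupp₁ c₁ c₂ hc₁ hc₂ h₁ h₂ ε hlb
end

section
/- Let α > 0, d > α an integer, g(x) = x² + x^{2d}, f(x) = x². Then there exist constants c₁, c₂ > 0 and β ∈ (0,1) such that, Lebesgue-a.e., d(f_#Γ_β)/dλ (x) ≥ c₁·d(g_#Γ_α)/dλ (x) for all x ∈ [0,1], and d(g_#Γ_α)/dλ (x) ≥ c₂·d(f_#Γ_β)/dλ (x) for all x ∈ [0,∞). -/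
open MeasureTheory

/-- The probability measure `Γ_a` on `ℝ` with density proportional to `exp(-|x|^a)`. -/
noncomputable def gammaMeasure (a : ℝ) : Measure ℝ :=
  ((volume.withDensity fun x => ENNReal.ofReal (Real.exp (-(|x| ^ a)))) Set.univ)⁻¹ •
    (volume.withDensity fun x => ENNReal.ofReal (Real.exp (-(|x| ^ a))))

/-!
Write `d = k + 1` and `g = f ∘ φ` with `φ x = x √(1 + x ^ (2k))` (`oddSqrt k`), an increasing
bijection of `ℝ` with `1 ≤ φ'`, `φ' x ≤ d (1 + |x| ^ (2k))` and `|x| ^ d ≤ |φ x|`. By the change of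
variables `t = φ x`, comparing `φ_# Γ_α` with `Γ_β` up to constants amounts to comparing the
densities `w_α` and `φ' · (w_β ∘ φ)`. Where `|φ x| ≤ 1`, the latter is at least `e⁻¹ ≥ e⁻¹ w_α`.
Everywhere, once `α < d β`, the bound `w_β (φ x) ≤ exp (-|x| ^ (d β))` decays fast enough to
absorb the polynomial growth of `φ'`, so `φ' · (w_β ∘ φ) ≤ C w_α`. Such comparisons of measures
survive the pushforward by `f` and pass to Radon–Nikodym derivatives.
-/

open Real Set Filter
open scoped ENNReal Nat

theorem rpow_le_div_mul_rpow_add_one_sub {a c y : ℝ} (hy : 0 ≤ y) (ha : 0 < a) (hac : a ≤ c) :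
    y ^ a ≤ a / c * y ^ c + (1 - a / c) := by
  have hc : 0 < c := ha.trans_le hac
  have hw : a / c ≤ 1 := (div_le_one hc).2 hac
  have := geom_mean_le_arith_mean2_weighted (div_nonneg ha.le hc.le) (sub_nonneg.2 hw)
    (rpow_nonneg hy c) zero_le_one (add_sub_cancel _ _)
  rwa [one_rpow, mul_one, mul_one, ← rpow_mul hy, mul_div_cancel₀ _ hc.ne'] at this

theorem exists_one_add_pow_le_mul_exp_mul_rpow (n : ℕ) {p ε : ℝ} (hp : 0 < p) (hε : 0 < ε) :
    ∃ C > 0, ∀ y : ℝ, 0 ≤ y → 1 + y ^ n ≤ C * exp (ε * y ^ p) := by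
  obtain ⟨m, hm⟩ : ∃ m : ℕ, (n : ℝ) / p ≤ m := exists_nat_ge _
  rw [div_le_iff₀ hp] at hm
  refine ⟨2 + m ! / ε ^ m, by positivity, fun y hy => ?_⟩
  have hpow : y ^ n ≤ 1 + y ^ (m * p) := by
    rcases le_total y 1 with hy1 | hy1
    · linarith [pow_le_one₀ hy hy1 (n := n), rpow_nonneg hy (m * p)]
    · rw [← rpow_natCast]
      linarith [rpow_le_rpow_of_exponent_le hy1 hm]
  have hexp : y ^ (m * p) ≤ m ! / ε ^ m * exp (ε * y ^ p) := by
    have h := pow_div_factorial_le_exp _ (mul_nonneg hε.le (rpow_nonneg hy p)) m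
    rw [div_le_iff₀ (by positivity)] at h
    rw [mul_comm (m : ℝ), rpow_mul hy, rpow_natCast, div_mul_eq_mul_div,
      le_div_iff₀ (by positivity)]
    calc (y ^ p) ^ m * ε ^ m = (ε * y ^ p) ^ m := by ring
      _ ≤ _ := by linarith
  have hone : 1 ≤ exp (ε * y ^ p) := one_le_exp (by positivity)
  nlinarith

theorem exists_one_add_pow_mul_exp_neg_rpow_le (n : ℕ) {a c : ℝ} (ha : 0 < a) (hac : a < c) :
    ∃ C > 0, ∀ y : ℝ, 0 ≤ y → (1 + y ^ n) * exp (-y ^ c) ≤ C * exp (-y ^ a) := by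
  have hc : 0 < c := ha.trans hac
  set ε := 1 - a / c
  have hε : 0 < ε := sub_pos.2 ((div_lt_one hc).2 hac)
  obtain ⟨C, hC, hpoly⟩ := exists_one_add_pow_le_mul_exp_mul_rpow n hc hε
  refine ⟨C * exp ε, by positivity, fun y hy => ?_⟩
  have hya := rpow_le_div_mul_rpow_add_one_sub hy ha hac.le
  calc (1 + y ^ n) * exp (-y ^ c) ≤ C * exp (ε * y ^ c) * exp (-y ^ c) := by
        gcongr; exact hpoly y hy
    _ = C * exp (-(a / c * y ^ c)) := by rw [mul_assoc, ← exp_add]; congr 2; simp only [ε]; ring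
    _ ≤ C * exp (ε - y ^ a) := by gcongr; linarith
    _ = C * exp ε * exp (-y ^ a) := by rw [sub_eq_add_neg, exp_add, mul_assoc]

noncomputable def oddSqrt (k : ℕ) (x : ℝ) : ℝ := x * √(1 + x ^ (2 * k))

noncomputable def oddSqrtDeriv (k : ℕ) (x : ℝ) : ℝ :=
  (1 + (k + 1) * x ^ (2 * k)) / √(1 + x ^ (2 * k))

theorem one_le_sqrt_one_add_pow_two_mul (k : ℕ) (x : ℝ) : 1 ≤ √(1 + x ^ (2 * k)) :=
  one_le_sqrt.2 (le_add_of_nonneg_right ((even_two_mul k).pow_nonneg x))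

theorem oddSqrt_sq (k : ℕ) (x : ℝ) : oddSqrt k x ^ 2 = x ^ 2 + x ^ (2 * (k + 1)) := by
  rw [oddSqrt, mul_pow, sq_sqrt (by linarith [(even_two_mul k).pow_nonneg x])]
  ring

theorem hasDerivAt_oddSqrt (k : ℕ) (x : ℝ) : HasDerivAt (oddSqrt k) (oddSqrtDeriv k x) x := by
  have hu : 0 < 1 + x ^ (2 * k) := by linarith [(even_two_mul k).pow_nonneg x]
  have hs : 0 < √(1 + x ^ (2 * k)) := sqrt_pos.2 hu
  have hpow : x * ((2 * k : ℕ) * x ^ (2 * k - 1)) = 2 * k * x ^ (2 * k) := by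
    rcases k with _ | j
    · simp
    · rw [show 2 * (j + 1) - 1 = 2 * j + 1 by omega]; push_cast; ring
  refine ((hasDerivAt_id' x).mul
    (((hasDerivAt_pow (2 * k) x).const_add 1).sqrt hu.ne')).congr_deriv ?_
  rw [oddSqrtDeriv, one_mul, ← mul_div_assoc, hpow, eq_div_iff hs.ne', add_mul,
    mul_self_sqrt hu.le, div_mul_eq_mul_div, mul_div_mul_right _ _ hs.ne']
  ring

theorem one_le_oddSqrtDeriv (k : ℕ) (x : ℝ) : 1 ≤ oddSqrtDeriv k x := by
  have hs := one_le_sqrt_one_add_pow_two_mul k x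
  have ht := (even_two_mul k).pow_nonneg x
  rw [oddSqrtDeriv, one_le_div (by positivity)]
  calc √(1 + x ^ (2 * k)) ≤ √(1 + x ^ (2 * k)) ^ 2 := by nlinarith
    _ ≤ 1 + (k + 1) * x ^ (2 * k) := by
      rw [sq_sqrt (by positivity)]; nlinarith [(k.cast_nonneg : (0 : ℝ) ≤ k)]

theorem oddSqrtDeriv_le (k : ℕ) (x : ℝ) : oddSqrtDeriv k x ≤ (k + 1) * (1 + |x| ^ (2 * k)) := by
  have ht := (even_two_mul k).pow_nonneg x
  rw [(even_two_mul k).pow_abs]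
  calc oddSqrtDeriv k x ≤ 1 + (k + 1) * x ^ (2 * k) :=
        div_le_self (by positivity) (one_le_sqrt_one_add_pow_two_mul k x)
    _ ≤ (k + 1) * (1 + x ^ (2 * k)) := by nlinarith [(k.cast_nonneg : (0 : ℝ) ≤ k)]

theorem strictMono_oddSqrt (k : ℕ) : StrictMono (oddSqrt k) :=
  strictMono_of_deriv_pos fun x => (hasDerivAt_oddSqrt k x).deriv ▸
    zero_lt_one.trans_le (one_le_oddSqrtDeriv k x)

theorem continuous_oddSqrt (k : ℕ) : Continuous (oddSqrt k) := by
  unfold oddSqrt; fun_prop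

theorem surjective_oddSqrt (k : ℕ) : Function.Surjective (oddSqrt k) := by
  have hs := one_le_sqrt_one_add_pow_two_mul k
  refine (continuous_oddSqrt k).surjective ?_ ?_
  · refine tendsto_atTop_mono' _ ?_ tendsto_id
    filter_upwards [eventually_ge_atTop 0] with x hx
    exact le_mul_of_one_le_right hx (hs x)
  · refine tendsto_atBot_mono' _ ?_ tendsto_id
    filter_upwards [eventually_le_atBot 0] with x hx
    show x * _ ≤ x
    nlinarith [hs x]

theorem abs_pow_succ_le_abs_oddSqrt (k : ℕ) (x : ℝ) : |x| ^ (k + 1) ≤ |oddSqrt k x| := by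
  rw [oddSqrt, abs_mul, abs_of_nonneg (sqrt_nonneg _), pow_succ',
    ← sqrt_sq (by positivity : 0 ≤ |x| ^ k)]
  gcongr
  rw [← pow_mul, mul_comm, (even_two_mul k).pow_abs]
  linarith

section ChangeOfVariables

variable {f f' : ℝ → ℝ}

theorem withDensity_eq_map_withDensity_abs_deriv_mul (hf : ∀ x, HasDerivAt f (f' x) x)
    (hinj : Function.Injective f) (hsurj : Function.Surjective f) (q : ℝ → ℝ≥0∞) :
    volume.withDensity q = (volume.withDensity fun x => ENNReal.ofReal |f' x| * q (f x)).map f := by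
  have hmeas : Measurable f :=
    (continuous_iff_continuousAt.2 fun x => (hf x).continuousAt).measurable
  ext s hs
  rw [Measure.map_apply hmeas hs, withDensity_apply _ hs, withDensity_apply _ (hmeas hs),
    ← lintegral_image_eq_lintegral_abs_deriv_mul (hmeas hs) (fun x _ => (hf x).hasDerivWithinAt)
      hinj.injOn, image_preimage_eq s hsurj]

theorem smul_withDensity_le_map_withDensity (hf : ∀ x, HasDerivAt f (f' x) x)
    (hinj : Function.Injective f) (hsurj : Function.Surjective f) {p q : ℝ → ℝ≥0∞} {c : ℝ≥0∞}
    (hc : c ≠ ∞) (h : ∀ x, c * (ENNReal.ofReal |f' x| * q (f x)) ≤ p x) :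
    c • volume.withDensity q ≤ (volume.withDensity p).map f := by
  have hmeas : Measurable f :=
    (continuous_iff_continuousAt.2 fun x => (hf x).continuousAt).measurable
  rw [withDensity_eq_map_withDensity_abs_deriv_mul hf hinj hsurj q, ← Measure.map_smul,
    ← withDensity_smul' _ _ hc]
  exact Measure.map_mono (withDensity_mono (Eventually.of_forall h)) hmeas

theorem smul_restrict_map_withDensity_le (hf : ∀ x, HasDerivAt f (f' x) x)
    (hinj : Function.Injective f) (hsurj : Function.Surjective f) {p q : ℝ → ℝ≥0∞} {c : ℝ≥0∞}
    (hc : c ≠ ∞) {s : Set ℝ} (hs : MeasurableSet s)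
    (h : ∀ x, f x ∈ s → c * p x ≤ ENNReal.ofReal |f' x| * q (f x)) :
    c • ((volume.withDensity p).map f).restrict s ≤ (volume.withDensity q).restrict s := by
  have hmeas : Measurable f :=
    (continuous_iff_continuousAt.2 fun x => (hf x).continuousAt).measurable
  rw [withDensity_eq_map_withDensity_abs_deriv_mul hf hinj hsurj q, Measure.restrict_map hmeas hs,
    Measure.restrict_map hmeas hs, ← Measure.map_smul, restrict_withDensity (hmeas hs),
    restrict_withDensity (hmeas hs), ← withDensity_smul' _ _ hc]
  exact Measure.map_mono
    (withDensity_mono ((ae_restrict_iff' (hmeas hs)).2 (Eventually.of_forall h))) hmeas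

end ChangeOfVariables

section MeasureComparison

variable {X : Type*} [MeasurableSpace X] {μ ν ρ : Measure X} [SigmaFinite ρ]

theorem rnDeriv_le_rnDeriv_of_le [IsFiniteMeasure ν] (h : μ ≤ ν) :
    μ.rnDeriv ρ ≤ᵐ[ρ] ν.rnDeriv ρ := by
  have := isFiniteMeasure_of_le ν h
  have := isFiniteMeasure_of_le ν (Measure.sub_le (μ := ν) (ν := μ))
  have hadd := Measure.rnDeriv_add (ν - μ) μ ρ
  rw [Measure.sub_add_cancel_of_le h] at hadd
  filter_upwards [hadd] with x hx
  rw [hx]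
  exact le_add_self

theorem ae_mul_rnDeriv_le_of_smul_restrict_le [IsFiniteMeasure μ] [IsFiniteMeasure ν] {s : Set X}
    (hs : MeasurableSet s) {c : ℝ≥0∞} (hc : c ≠ ∞) (h : c • μ.restrict s ≤ ν.restrict s) :
    ∀ᵐ x ∂ρ, x ∈ s → c * μ.rnDeriv ρ x ≤ ν.rnDeriv ρ x := by
  filter_upwards [rnDeriv_le_rnDeriv_of_le h,
    Measure.rnDeriv_smul_left_of_ne_top (μ.restrict s) ρ hc,
    μ.rnDeriv_restrict ρ hs, ν.rnDeriv_restrict ρ hs] with x hle hsmul hμ hν hx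
  rwa [hsmul, Pi.smul_apply, hμ, hν, indicator_of_mem hx, indicator_of_mem hx] at hle

theorem exists_smul_smul_le_smul {a b c : ℝ≥0∞} (ha₀ : a ≠ 0) (ha : a ≠ ∞) (hb₀ : b ≠ 0)
    (hb : b ≠ ∞) (hc₀ : c ≠ 0) (hc : c ≠ ∞) (h : a • μ ≤ ν) :
    ∃ a' : ℝ≥0∞, a' ≠ 0 ∧ a' ≠ ∞ ∧ a' • b • μ ≤ c • ν := by
  refine ⟨c * a * b⁻¹, by simp [*], by simp [*, ENNReal.mul_eq_top], ?_⟩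
  rw [smul_smul, mul_assoc, ENNReal.inv_mul_cancel hb₀ hb, mul_one, ← smul_smul]
  gcongr

end MeasureComparison

noncomputable def expWeight (a : ℝ) : Measure ℝ :=
  volume.withDensity fun x => ENNReal.ofReal (exp (-(|x| ^ a)))

instance neZero_expWeight (a : ℝ) : NeZero (expWeight a) := by
  refine ⟨fun h => ?_⟩
  rw [expWeight, withDensity_eq_zero_iff (by fun_prop)] at h
  obtain ⟨x, hx⟩ := h.exists
  exact (ENNReal.ofReal_pos.2 (exp_pos _)).ne' hx

theorem isFiniteMeasure_expWeight {a : ℝ} (ha : 0 < a) : IsFiniteMeasure (expWeight a) := by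
  obtain ⟨C, -, hC⟩ := exists_one_add_pow_le_mul_exp_mul_rpow 2 ha one_pos
  refine isFiniteMeasure_withDensity_ofReal ((integrable_inv_one_add_sq.const_mul C).mono'
    (measurable_abs.pow_const a).neg.exp.aestronglyMeasurable
    (Eventually.of_forall fun x => ?_)).hasFiniteIntegral
  have h := hC |x| (abs_nonneg x)
  rw [sq_abs, one_mul, mul_comm] at h
  change ‖exp (-(|x| ^ a))‖ ≤ C * (1 + x ^ 2)⁻¹
  rwa [norm_of_nonneg (exp_pos _).le, le_mul_inv_iff₀ (by positivity), exp_neg,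
    inv_mul_le_iff₀ (exp_pos _)]

theorem exists_gammaMeasure_eq_smul {a : ℝ} (ha : 0 < a) :
    ∃ c : ℝ≥0∞, c ≠ 0 ∧ c ≠ ∞ ∧ gammaMeasure a = c • expWeight a := by
  have := isFiniteMeasure_expWeight ha
  exact ⟨_, ENNReal.inv_ne_zero.2 (measure_ne_top (expWeight a) _),
    ENNReal.inv_ne_top.2 (Measure.measure_univ_ne_zero.2 (NeZero.ne _)), rfl⟩

instance isFiniteMeasure_gammaMeasure (a : ℝ) : IsFiniteMeasure (gammaMeasure a) :=
  IsFiniteMeasure.average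

theorem exists_oddSqrtDeriv_mul_exp_le (k : ℕ) {a b : ℝ} (ha : 0 < a) (hb : 0 < b)
    (hab : a < (k + 1) * b) :
    ∃ K > 0, ∀ x, oddSqrtDeriv k x * exp (-|oddSqrt k x| ^ b) ≤ K * exp (-|x| ^ a) := by
  obtain ⟨C, hC, hbound⟩ := exists_one_add_pow_mul_exp_neg_rpow_le (2 * k) ha hab
  refine ⟨(k + 1) * C, by positivity, fun x => ?_⟩
  have hexp : |x| ^ ((k + 1) * b) ≤ |oddSqrt k x| ^ b := by
    rw [show (k + 1 : ℝ) = (k + 1 : ℕ) by push_cast; ring, rpow_mul (abs_nonneg x), rpow_natCast]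
    exact rpow_le_rpow (by positivity) (abs_pow_succ_le_abs_oddSqrt k x) hb.le
  calc oddSqrtDeriv k x * exp (-|oddSqrt k x| ^ b)
      ≤ (k + 1) * (1 + |x| ^ (2 * k)) * exp (-|x| ^ ((k + 1) * b)) := by
        gcongr
        exact oddSqrtDeriv_le k x
    _ ≤ (k + 1) * (C * exp (-|x| ^ a)) := by
        rw [mul_assoc]
        exact mul_le_mul_of_nonneg_left (hbound |x| (abs_nonneg x)) (by positivity)
    _ = (k + 1) * C * exp (-|x| ^ a) := by ring

theorem exists_smul_expWeight_le_map_oddSqrt (k : ℕ) {a b : ℝ} (ha : 0 < a) (hb : 0 < b)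
    (hab : a < (k + 1) * b) :
    ∃ c : ℝ≥0∞, c ≠ 0 ∧ c ≠ ∞ ∧ c • expWeight b ≤ (expWeight a).map (oddSqrt k) := by
  obtain ⟨K, hK, hbound⟩ := exists_oddSqrtDeriv_mul_exp_le k ha hb hab
  refine ⟨ENNReal.ofReal K⁻¹, by simpa using hK, ENNReal.ofReal_ne_top,
    smul_withDensity_le_map_withDensity (hasDerivAt_oddSqrt k) (strictMono_oddSqrt k).injective
      (surjective_oddSqrt k) ENNReal.ofReal_ne_top fun x => ?_⟩
  rw [← ENNReal.ofReal_mul (abs_nonneg _), ← ENNReal.ofReal_mul (by positivity)]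
  refine ENNReal.ofReal_le_ofReal ?_
  rw [abs_of_pos (zero_lt_one.trans_le (one_le_oddSqrtDeriv k x)), inv_mul_le_iff₀ hK]
  exact hbound x

theorem smul_restrict_map_oddSqrt_le (k : ℕ) (a : ℝ) {b : ℝ} (hb : 0 ≤ b) {s : Set ℝ}
    (hs : MeasurableSet s) (hs₁ : s ⊆ Icc (-1) 1) :
    ENNReal.ofReal (exp (-1)) • ((expWeight a).map (oddSqrt k)).restrict s
      ≤ (expWeight b).restrict s := by
  refine smul_restrict_map_withDensity_le (hasDerivAt_oddSqrt k) (strictMono_oddSqrt k).injective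
    (surjective_oddSqrt k) ENNReal.ofReal_ne_top hs fun x hx => ?_
  rw [← ENNReal.ofReal_mul (exp_pos _).le, ← ENNReal.ofReal_mul (abs_nonneg _)]
  refine ENNReal.ofReal_le_ofReal ?_
  have h₁ : |oddSqrt k x| ^ b ≤ 1 := rpow_le_one (abs_nonneg _) (abs_le.2 (hs₁ hx)) hb
  calc exp (-1) * exp (-|x| ^ a) ≤ exp (-1) * 1 := by
        gcongr
        exact exp_le_one_iff.2 (neg_nonpos.2 (by positivity))
    _ ≤ 1 * exp (-|oddSqrt k x| ^ b) := by
        rw [mul_one, one_mul]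
        exact exp_le_exp.2 (neg_le_neg h₁)
    _ ≤ |oddSqrtDeriv k x| * exp (-|oddSqrt k x| ^ b) := by
        gcongr
        exact (one_le_oddSqrtDeriv k x).trans (le_abs_self _)

theorem exists_smul_gammaMeasure_le_map_oddSqrt (k : ℕ) {a b : ℝ} (ha : 0 < a) (hb : 0 < b)
    (hab : a < (k + 1) * b) :
    ∃ c : ℝ≥0∞, c ≠ 0 ∧ c ≠ ∞ ∧ c • gammaMeasure b ≤ (gammaMeasure a).map (oddSqrt k) := by
  obtain ⟨c, hc₀, hc, h⟩ := exists_smul_expWeight_le_map_oddSqrt k ha hb hab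
  obtain ⟨ca, hca₀, hca, hga⟩ := exists_gammaMeasure_eq_smul ha
  obtain ⟨cb, hcb₀, hcb, hgb⟩ := exists_gammaMeasure_eq_smul hb
  rw [hga, hgb, Measure.map_smul]
  exact exists_smul_smul_le_smul hc₀ hc hcb₀ hcb hca₀ hca h

theorem exists_smul_restrict_map_gammaMeasure_le (k : ℕ) {a b : ℝ} (ha : 0 < a) (hb : 0 < b)
    {s : Set ℝ} (hs : MeasurableSet s) (hs₁ : s ⊆ Icc (-1) 1) :
    ∃ c : ℝ≥0∞, c ≠ 0 ∧ c ≠ ∞ ∧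
      c • ((gammaMeasure a).map (oddSqrt k)).restrict s ≤ (gammaMeasure b).restrict s := by
  obtain ⟨ca, hca₀, hca, hga⟩ := exists_gammaMeasure_eq_smul ha
  obtain ⟨cb, hcb₀, hcb, hgb⟩ := exists_gammaMeasure_eq_smul hb
  rw [hga, hgb, Measure.map_smul, Measure.restrict_smul, Measure.restrict_smul]
  exact exists_smul_smul_le_smul (ENNReal.ofReal_pos.2 (exp_pos _)).ne' ENNReal.ofReal_ne_top
    hca₀ hca hcb₀ hcb (smul_restrict_map_oddSqrt_le k a hb.le hs hs₁)

/-- density squeeze: for `g(x) = x² + x^{2d}` (`d > α`) and `f(x) = x²`,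
there are `c₁, c₂ > 0` and `β ∈ (0,1)` so that a.e. the density of `f_#Γ_β` dominates
`c₁` times that of `g_#Γ_α` on `[0,1]`, and the density of `g_#Γ_α` dominates `c₂`
times that of `f_#Γ_β` on `[0,∞)`. -/
theorem density_squeeze (α : ℝ) (hα : 0 < α) (d : ℕ) (hd : α < (d : ℝ))
    (g f : ℝ → ℝ) (hg : g = fun x => x ^ 2 + x ^ (2 * d)) (hf : f = fun x => x ^ 2) :
    ∃ c₁ > (0 : ℝ), ∃ c₂ > (0 : ℝ), ∃ β ∈ Set.Ioo (0 : ℝ) 1,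
      (∀ᵐ x ∂(volume : Measure ℝ), x ∈ Set.Icc (0 : ℝ) 1 →
        ENNReal.ofReal c₁ * Measure.rnDeriv (Measure.map g (gammaMeasure α)) volume x
          ≤ Measure.rnDeriv (Measure.map f (gammaMeasure β)) volume x) ∧
      (∀ᵐ x ∂(volume : Measure ℝ), 0 ≤ x →
        ENNReal.ofReal c₂ * Measure.rnDeriv (Measure.map f (gammaMeasure β)) volume x
          ≤ Measure.rnDeriv (Measure.map g (gammaMeasure α)) volume x) := by
  subst hg hf
  obtain ⟨k, rfl⟩ : ∃ k, d = k + 1 := Nat.exists_eq_add_one.2 (by exact_mod_cast hα.trans hd)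
  push_cast at hd
  have hαk : α / (k + 1) < 1 := (div_lt_one (by positivity)).2 hd
  obtain ⟨β, hβ, hαβ⟩ : ∃ β ∈ Ioo (0 : ℝ) 1, α < (k + 1) * β :=
    ⟨(α / (k + 1) + 1) / 2, ⟨by positivity, by linarith⟩, by
      rw [← div_lt_iff₀' (by positivity)]; linarith⟩
  have hsq : Measurable fun x : ℝ => x ^ 2 := by fun_prop
  have hmap : (gammaMeasure α).map (fun x => x ^ 2 + x ^ (2 * (k + 1)))
      = ((gammaMeasure α).map (oddSqrt k)).map fun x => x ^ 2 := by
    rw [Measure.map_map hsq (continuous_oddSqrt k).measurable]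
    congr 1
    exact funext fun x => (oddSqrt_sq k x).symm
  have hsub : (fun x : ℝ => x ^ 2) ⁻¹' Icc 0 1 ⊆ Icc (-1) 1 := fun x hx =>
    abs_le.1 ((sq_le_one_iff_abs_le_one x).1 hx.2)
  obtain ⟨c₁, hc₁₀, hc₁, h₁⟩ :=
    exists_smul_restrict_map_gammaMeasure_le k hα hβ.1 (hsq measurableSet_Icc) hsub
  obtain ⟨c₂, hc₂₀, hc₂, h₂⟩ := exists_smul_gammaMeasure_le_map_oddSqrt k hα hβ.1 hαβ
  refine ⟨c₁.toReal, ENNReal.toReal_pos hc₁₀ hc₁, c₂.toReal, ENNReal.toReal_pos hc₂₀ hc₂, β, hβ,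
    ?_, ?_⟩
  · rw [ENNReal.ofReal_toReal hc₁]
    refine ae_mul_rnDeriv_le_of_smul_restrict_le measurableSet_Icc hc₁ ?_
    rw [hmap, Measure.restrict_map hsq measurableSet_Icc,
      Measure.restrict_map hsq measurableSet_Icc, ← Measure.map_smul]
    exact Measure.map_mono h₁ hsq
  · rw [ENNReal.ofReal_toReal hc₂]
    refine ae_mul_rnDeriv_le_of_smul_restrict_le measurableSet_Ici hc₂ ?_
    rw [hmap, ← Measure.restrict_smul, ← Measure.map_smul]
    exact Measure.restrict_mono subset_rfl (Measure.map_mono h₂ hsq)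
end
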